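/- Let ψ:ℕ→(0,∞) be non-increasing with tψ(t)<1 for all large t, and let Ψ(t)=tψ(t)/(1−tψ(t)). Then an irrational x=[a₁,a₂,…]∈[0,1) belongs to D(ψ) if and only if [a_{n+1}, a_{n+2}, …] · [a_n, a_{n−1}, …, a₁] > 1/Ψ(q_n(x)) for all sufficiently large n, where [a_{n+1},a_{n+2},…] denotes the value of the infinite continued fraction with those partial quotients, [a_n,…,a₁] the value of the finite one, and q_n(x) the denominators of the convergents of x. -/

import Mathlib

open Filter MeasureTheory Set

/-- The set `D(ψ)` of `ψ`-Dirichlet improvable numbers, for `ψ : ℕ → ℝ`: those `x ∈ ℝ`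
such that for all sufficiently large `t ∈ ℕ` the system `|qx - p| < ψ t`, `|q| < t` has a
nontrivial integer solution `(p, q)`. -/
def DirichletSetNat (ψ : ℕ → ℝ) : Set ℝ :=
  {x | ∃ N : ℕ, ∀ t : ℕ, t > N →
    ∃ p q : ℤ, (p, q) ≠ (0, 0) ∧ |(q : ℝ) * x - p| < ψ t ∧ |(q : ℝ)| < t}

/-- The Gauss map `T(x) = 1/x mod 1`, with `T(0) = 0`.  For irrational `x ∈ [0,1)` with
continued fraction expansion `x = [a₁, a₂, …]`, the iterate `T^[n] x` is the value of
the infinite continued fraction `[a_{n+1}, a_{n+2}, …]` (i.e. `1/(a_{n+1} + 1/(…))`). -/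
noncomputable def gaussMap (x : ℝ) : ℝ := if x = 0 then 0 else Int.fract (1 / x)

/-- `cfA x n` is the `n`-th partial quotient `a_n(x)` of the continued fraction
expansion of `x ∈ [0,1)`, for `n ≥ 1`: `a_n(x) = ⌊1 / T^{n-1}(x)⌋`. -/
noncomputable def cfA (x : ℝ) (n : ℕ) : ℕ := ⌊1 / (gaussMap^[n - 1] x)⌋₊

/-- `cfQ x n` is the denominator `q_n(x)` of the `n`-th convergent of `x`:
`q₀ = 1`, `q₁ = a₁`, `q_{n+2} = a_{n+2} q_{n+1} + q_n`. -/
noncomputable def cfQ (x : ℝ) : ℕ → ℕ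
  | 0 => 1
  | 1 => cfA x 1
  | (n + 2) => cfA x (n + 2) * cfQ x (n + 1) + cfQ x n

/-- The value of the finite continued fraction `[b₁, b₂, …, b_k] = 1/(b₁ + 1/(b₂ + ⋯))`
given by a list of partial quotients; the empty list has value `0`. -/
noncomputable def finCFValue : List ℕ → ℝ
  | [] => 0
  | b :: l => 1 / (b + finCFValue l)

/-! Write `T` for the Gauss map. The recursions for `q_n`, `p_n` and `a_n + T^n x = 1 / T^{n-1} x`
give `|q_{n-1} x - p_{n-1}| = 1 / (q_n + q_{n-1} T^n x)`, and the signs of `q_n x - p_n`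
alternate, so by Lagrange's argument no `(p, q) ≠ 0` with `|q| < q_n` beats the convergent
`p_{n-1}/q_{n-1}`. Hence `x ∈ D(ψ)` iff `|q_{n-1} x - p_{n-1}| < ψ(q_n)` for all large `n`
(take `t = q_n` in one direction, and for `q_{n-1} < t ≤ q_n` the convergent `p_{n-1}/q_{n-1}`
in the other). As `[a_n, …, a₁] = q_{n-1}/q_n`, this inequality rearranges to
`T^n x · [a_n, …, a₁] > 1/Ψ(q_n)`. -/

theorem abs_le_abs_add_of_mul_nonneg {a b : ℝ} (h : 0 ≤ a * b) : |b| ≤ |a + b| := by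
  have hsum : |a + b| = |a| + |b| := by
    rcases mul_nonneg_iff.1 h with h | h
    · exact (abs_add_eq_add_abs_iff a b).2 (Or.inl h)
    · exact (abs_add_eq_add_abs_iff a b).2 (Or.inr h)
  linarith [abs_nonneg a]

theorem exists_mul_add_mul_eq_of_det {R : Type*} [CommRing R] {P₁ P₀ Q₁ Q₀ ε : R}
    (hdet : P₁ * Q₀ - P₀ * Q₁ = ε) (hε : ε * ε = 1) (p q : R) :
    ∃ α β : R, α * P₁ + β * P₀ = p ∧ α * Q₁ + β * Q₀ = q :=
  ⟨ε * (p * Q₀ - q * P₀), ε * (q * P₁ - p * Q₁),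
    by linear_combination (ε * p) * hdet + p * hε,
    by linear_combination (ε * q) * hdet + q * hε⟩

theorem Int.ne_zero_and_mul_nonpos_of_mul_add_mul_eq {α β Q₁ Q₀ q : ℤ}
    (h : α * Q₁ + β * Q₀ = q) (hq : |q| < Q₁) (hQ₀ : 0 ≤ Q₀) (hαβ : (α, β) ≠ (0, 0)) :
    β ≠ 0 ∧ α * β ≤ 0 := by
  have hQ₁ : 0 < Q₁ := (abs_nonneg q).trans_lt hq
  constructor
  · rintro rfl
    have hα : α ≠ 0 := fun hα => hαβ (by rw [hα])
    have : Q₁ ≤ |q| := by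
      rw [← h, zero_mul, add_zero, abs_mul, abs_of_pos hQ₁]
      exact le_mul_of_one_le_left hQ₁.le (Int.one_le_abs hα)
    omega
  · by_contra! hpos
    rcases mul_pos_iff.1 hpos with ⟨hα, hβ⟩ | ⟨hα, hβ⟩
    · have : Q₁ ≤ q := by nlinarith
      rw [abs_lt] at hq
      omega
    · have : q ≤ -Q₁ := by nlinarith
      rw [abs_lt] at hq
      omega

theorem Nat.exists_lt_le_succ_of_monotone {f : ℕ → ℕ} (hf : Monotone f) {N t : ℕ}
    (hN : f N < t) (ht : ∃ m, t ≤ f m) : ∃ n ≥ N, f n < t ∧ t ≤ f (n + 1) := by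
  classical
  have hlt : N < Nat.find ht := by
    by_contra! hle
    exact (Nat.find_spec ht).not_gt (hN.trans_le' (hf hle))
  obtain ⟨n, hn⟩ := Nat.exists_eq_add_of_lt hlt
  refine ⟨N + n, by omega, not_le.1 (Nat.find_min ht (by omega)), ?_⟩
  rw [show N + n + 1 = Nat.find ht by omega]
  exact Nat.find_spec ht

theorem Irrational.gaussMap_mem_Ioo {y : ℝ} (h : Irrational y) (hy : y ∈ Ioo 0 1) :
    Irrational (gaussMap y) ∧ gaussMap y ∈ Ioo 0 1 := by
  have hfract : Irrational (Int.fract (1 / y)) := (one_div y ▸ h.inv).sub_intCast _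
  rw [gaussMap, if_neg hy.1.ne']
  exact ⟨hfract, (Int.fract_nonneg _).lt_of_ne' hfract.ne_zero, Int.fract_lt_one _⟩

theorem Irrational.gaussMap_iterate_mem_Ioo {x : ℝ} (h : Irrational x) (hx : x ∈ Ioo 0 1)
    (n : ℕ) : gaussMap^[n] x ∈ Ioo 0 1 := by
  suffices Irrational (gaussMap^[n] x) ∧ gaussMap^[n] x ∈ Ioo 0 1 from this.2
  induction n with
  | zero => exact ⟨h, hx⟩
  | succ n ih =>
    rw [Function.iterate_succ_apply']
    exact ih.1.gaussMap_mem_Ioo ih.2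

-- `cfDen x (n + 1) = q_n(x)` and `cfNum x (n + 1) = p_n(x)`; the shift makes room for
-- `q_{-1} = 0` and `p_{-1} = 1`, which start the recursion.
noncomputable def cfDen (x : ℝ) : ℕ → ℕ
  | 0 => 0
  | 1 => 1
  | n + 2 => cfA x (n + 1) * cfDen x (n + 1) + cfDen x n

noncomputable def cfNum (x : ℝ) : ℕ → ℤ
  | 0 => 1
  | 1 => 0
  | n + 2 => cfA x (n + 1) * cfNum x (n + 1) + cfNum x n

noncomputable def cfErr (x : ℝ) (n : ℕ) : ℝ := cfDen x n * x - cfNum x n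

theorem cfQ_eq_cfDen (x : ℝ) : ∀ n, cfQ x n = cfDen x (n + 1)
  | 0 => rfl
  | 1 => by simp [cfQ, cfDen]
  | n + 2 => by rw [cfQ, cfDen, cfQ_eq_cfDen x (n + 1), cfQ_eq_cfDen x n]

theorem cfNum_succ_mul_cfDen_sub (x : ℝ) :
    ∀ n, cfNum x (n + 1) * cfDen x n - cfNum x n * cfDen x (n + 1) = (-1) ^ (n + 1)
  | 0 => by simp [cfNum, cfDen]
  | n + 1 => by
    simp only [cfNum, cfDen, Nat.cast_add, Nat.cast_mul]
    linear_combination -cfNum_succ_mul_cfDen_sub x n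

theorem cfErr_add_two (x : ℝ) (n : ℕ) :
    cfErr x (n + 2) = cfA x (n + 1) * cfErr x (n + 1) + cfErr x n := by
  simp only [cfErr, cfDen, cfNum, Nat.cast_add, Nat.cast_mul, Int.cast_add, Int.cast_mul,
    Int.cast_natCast]
  ring

section InfiniteExpansion

variable {x : ℝ}

theorem cfA_add_gaussMap_iterate_succ_mul (hx : ∀ n, gaussMap^[n] x ∈ Ioo 0 1) (n : ℕ) :
    (cfA x (n + 1) + gaussMap^[n + 1] x) * gaussMap^[n] x = 1 := by
  have hpos := (hx n).1
  rw [Function.iterate_succ_apply', gaussMap, if_neg hpos.ne', cfA, Nat.add_sub_cancel,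
    natCast_floor_eq_intCast_floor (by positivity), Int.floor_add_fract,
    one_div_mul_cancel hpos.ne']

theorem one_le_cfA (hx : ∀ n, gaussMap^[n] x ∈ Ioo 0 1) (n : ℕ) : 1 ≤ cfA x (n + 1) := by
  rw [cfA, Nat.add_sub_cancel, Nat.le_floor_iff (by have := (hx n).1; positivity),
    Nat.cast_one, le_one_div zero_lt_one (hx n).1, div_one]
  exact (hx n).2.le

theorem cfDen_add_le (hx : ∀ n, gaussMap^[n] x ∈ Ioo 0 1) (n : ℕ) :
    cfDen x (n + 1) + cfDen x n ≤ cfDen x (n + 2) :=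
  Nat.add_le_add_right (Nat.le_mul_of_pos_left _ (one_le_cfA hx n)) _

theorem cfDen_mono (hx : ∀ n, gaussMap^[n] x ∈ Ioo 0 1) : Monotone (cfDen x) :=
  monotone_nat_of_le_succ fun
    | 0 => Nat.zero_le _
    | n + 1 => (Nat.le_add_right _ _).trans (cfDen_add_le hx n)

theorem one_le_cfDen_succ (hx : ∀ n, gaussMap^[n] x ∈ Ioo 0 1) (n : ℕ) :
    1 ≤ cfDen x (n + 1) :=
  cfDen_mono hx (Nat.le_add_left 1 n)

theorem le_cfDen_succ (hx : ∀ n, gaussMap^[n] x ∈ Ioo 0 1) : ∀ n, n ≤ cfDen x (n + 1)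
  | 0 => Nat.zero_le _
  | 1 => one_le_cfDen_succ hx 1
  | n + 2 => by
    have : n + 1 ≤ cfDen x (n + 2) := le_cfDen_succ hx (n + 1)
    have : cfDen x (n + 2) + cfDen x (n + 1) ≤ cfDen x (n + 3) := cfDen_add_le hx (n + 1)
    have := one_le_cfDen_succ hx n
    show n + 2 ≤ cfDen x (n + 3)
    omega

theorem tendsto_cfDen_atTop (hx : ∀ n, gaussMap^[n] x ∈ Ioo 0 1) :
    Tendsto (cfDen x) atTop atTop :=
  tendsto_atTop_atTop_of_monotone (cfDen_mono hx) fun n => ⟨n + 1, le_cfDen_succ hx n⟩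

theorem cfErr_succ (hx : ∀ n, gaussMap^[n] x ∈ Ioo 0 1) :
    ∀ n, cfErr x (n + 1) = -gaussMap^[n] x * cfErr x n
  | 0 => by simp [cfErr, cfDen, cfNum]
  | n + 1 => by
    refine mul_left_cancel₀ (hx n).1.ne' ?_
    rw [cfErr_add_two]
    linear_combination cfErr x (n + 1) * cfA_add_gaussMap_iterate_succ_mul hx n +
      cfErr_succ hx n

theorem cfErr_succ_mul_cfErr_nonpos (hx : ∀ n, gaussMap^[n] x ∈ Ioo 0 1) (n : ℕ) :
    cfErr x (n + 1) * cfErr x n ≤ 0 := by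
  rw [cfErr_succ hx, mul_assoc, neg_mul, neg_nonpos]
  exact mul_nonneg (hx n).1.le (mul_self_nonneg _)

theorem cfDen_add_mul_abs_cfErr (hx : ∀ n, gaussMap^[n] x ∈ Ioo 0 1) :
    ∀ n, (cfDen x (n + 1) + cfDen x n * gaussMap^[n] x) * |cfErr x n| = 1
  | 0 => by simp [cfErr, cfDen, cfNum]
  | n + 1 => by
    rw [cfErr_succ hx, abs_mul, abs_neg, abs_of_pos (hx n).1]
    simp only [cfDen, Nat.cast_add, Nat.cast_mul]
    linear_combination cfDen_add_mul_abs_cfErr hx n +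
      cfDen x (n + 1) * |cfErr x n| * cfA_add_gaussMap_iterate_succ_mul hx n

theorem finCFValue_eq_cfDen_div (hx : ∀ n, gaussMap^[n] x ∈ Ioo 0 1) :
    ∀ n, finCFValue ((List.range' 1 n).reverse.map (cfA x)) = cfDen x n / cfDen x (n + 1)
  | 0 => by simp [finCFValue, cfDen]
  | n + 1 => by
    have hpos : (0 : ℝ) < cfDen x (n + 1) := by exact_mod_cast one_le_cfDen_succ hx n
    rw [List.range'_1_concat, List.reverse_append, List.map_append, List.reverse_singleton,
      List.map_singleton, List.singleton_append, finCFValue, finCFValue_eq_cfDen_div hx n,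
      add_comm 1 n, cfDen]
    push_cast
    field_simp

theorem abs_cfErr_le (hx : ∀ n, gaussMap^[n] x ∈ Ioo 0 1) (n : ℕ) {p q : ℤ}
    (hpq : (p, q) ≠ (0, 0)) (hq : |(q : ℝ)| < cfDen x (n + 1)) :
    |cfErr x n| ≤ |q * x - p| := by
  obtain ⟨α, β, hp_eq, hq_eq⟩ := exists_mul_add_mul_eq_of_det (cfNum_succ_mul_cfDen_sub x n)
    (by rw [← mul_pow]; norm_num) p q
  have hαβ : (α, β) ≠ (0, 0) := by
    rintro ⟨⟩
    exact hpq (by rw [← hp_eq, ← hq_eq]; simp)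
  obtain ⟨hβ, hαβ_nonpos⟩ := Int.ne_zero_and_mul_nonpos_of_mul_add_mul_eq hq_eq
    (by exact_mod_cast hq) (Nat.cast_nonneg _) hαβ
  have hsplit : q * x - p = α * cfErr x (n + 1) + β * cfErr x n := by
    rw [← hp_eq, ← hq_eq, cfErr, cfErr]
    push_cast
    ring
  rw [hsplit]
  -- the two summands have the same sign, since `α β ≤ 0` and consecutive errors alternate
  calc |cfErr x n| ≤ |(β : ℝ)| * |cfErr x n| :=
        le_mul_of_one_le_left (abs_nonneg _) (by exact_mod_cast Int.one_le_abs hβ)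
    _ = |β * cfErr x n| := (abs_mul _ _).symm
    _ ≤ |α * cfErr x (n + 1) + β * cfErr x n| := by
        refine abs_le_abs_add_of_mul_nonneg ?_
        rw [mul_mul_mul_comm]
        exact mul_nonneg_of_nonpos_of_nonpos (by exact_mod_cast hαβ_nonpos)
          (cfErr_succ_mul_cfErr_nonpos hx n)

theorem eventually_abs_cfErr_lt_of_mem_dirichletSetNat {ψ : ℕ → ℝ}
    (hx : ∀ n, gaussMap^[n] x ∈ Ioo 0 1) (h : x ∈ DirichletSetNat ψ) :
    ∀ᶠ n in atTop, |cfErr x n| < ψ (cfDen x (n + 1)) := by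
  obtain ⟨N, hN⟩ := h
  filter_upwards [((tendsto_cfDen_atTop hx).comp (tendsto_add_atTop_nat 1)).eventually_gt_atTop N]
    with n hn
  obtain ⟨p, q, hpq, hlt, hq⟩ := hN _ hn
  exact (abs_cfErr_le hx n hpq hq).trans_lt hlt

theorem mem_dirichletSetNat_of_eventually_abs_cfErr_lt {ψ : ℕ → ℝ}
    (hψ : ∀ m n : ℕ, 0 < m → m ≤ n → ψ n ≤ ψ m) (hx : ∀ n, gaussMap^[n] x ∈ Ioo 0 1)
    (h : ∀ᶠ n in atTop, |cfErr x n| < ψ (cfDen x (n + 1))) : x ∈ DirichletSetNat ψ := by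
  obtain ⟨N, hN⟩ := eventually_atTop.1 h
  refine ⟨cfDen x (N + 1), fun t ht => ?_⟩
  -- the convergent `p_{n-1}/q_{n-1}` with `q_{n-1} < t ≤ q_n`
  obtain ⟨n, hn, hlt, hle⟩ := Nat.exists_lt_le_succ_of_monotone (cfDen_mono hx) ht
    ((tendsto_cfDen_atTop hx).eventually_ge_atTop t).exists
  refine ⟨cfNum x n, cfDen x n, ?_, ?_, ?_⟩
  · have : 1 ≤ cfDen x n := cfDen_mono hx (by omega : 1 ≤ n)
    simp only [ne_eq, Prod.mk.injEq, Nat.cast_eq_zero, not_and_or]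
    omega
  · calc |(cfDen x n : ℤ) * x - cfNum x n| = |cfErr x n| := by rw [cfErr, Int.cast_natCast]
      _ < ψ (cfDen x (n + 1)) := hN n (by omega)
      _ ≤ ψ t := hψ t _ (by omega) hle
  · rw [Int.cast_natCast, Nat.abs_cast]
    exact_mod_cast hlt

theorem mem_dirichletSetNat_iff_eventually_abs_cfErr_lt {ψ : ℕ → ℝ}
    (hψ : ∀ m n : ℕ, 0 < m → m ≤ n → ψ n ≤ ψ m) (hx : ∀ n, gaussMap^[n] x ∈ Ioo 0 1) :
    x ∈ DirichletSetNat ψ ↔ ∀ᶠ n in atTop, |cfErr x n| < ψ (cfDen x (n + 1)) :=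
  ⟨eventually_abs_cfErr_lt_of_mem_dirichletSetNat hx,
    mem_dirichletSetNat_of_eventually_abs_cfErr_lt hψ hx⟩

theorem abs_cfErr_lt_iff (hx : ∀ n, gaussMap^[n] x ∈ Ioo 0 1) (n : ℕ) {c : ℝ} (hc : 0 < c) :
    |cfErr x n| < c ↔ 1 / (cfQ x n * c / (1 - cfQ x n * c)) <
      gaussMap^[n] x * finCFValue ((List.range' 1 n).reverse.map (cfA x)) := by
  have hQ : (0 : ℝ) < cfDen x (n + 1) := by exact_mod_cast one_le_cfDen_succ hx n
  have hid := cfDen_add_mul_abs_cfErr hx n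
  have hS : 0 < (cfDen x (n + 1) + cfDen x n * gaussMap^[n] x : ℝ) := by
    have := (hx n).1
    positivity
  rw [cfQ_eq_cfDen, finCFValue_eq_cfDen_div hx, one_div_div, div_lt_iff₀ (by positivity),
    ← mul_lt_mul_iff_of_pos_left hS, hid]
  constructor <;> intro h
  · field_simp
    linarith
  · field_simp at h
    linarith

end InfiniteExpansion

theorem mem_dirichletSet_iff_gaussMap_prod_general
    (ψ : ℕ → ℝ) (hψpos : ∀ t : ℕ, 0 < t → 0 < ψ t)
    (hψanti : ∀ m n : ℕ, 0 < m → m ≤ n → ψ n ≤ ψ m)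
    (Ψ : ℕ → ℝ) (hΨ : ∀ t : ℕ, Ψ t = t * ψ t / (1 - t * ψ t))
    (x : ℝ) (hx : x ∈ Ico (0 : ℝ) 1) (hirr : Irrational x) :
    x ∈ DirichletSetNat ψ ↔
      ∃ N : ℕ, ∀ n ≥ N, 0 < n →
        1 / Ψ (cfQ x n) <
          (gaussMap^[n] x) * finCFValue ((List.range' 1 n).reverse.map (cfA x)) := by
  have hT := hirr.gaussMap_iterate_mem_Ioo ⟨hx.1.lt_of_ne' hirr.ne_zero, hx.2⟩
  rw [mem_dirichletSetNat_iff_eventually_abs_cfErr_lt hψanti hT, ← eventually_atTop]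
  refine eventually_congr ((eventually_gt_atTop 0).mono fun n hn => ?_)
  rw [imp_iff_right hn, hΨ, ← cfQ_eq_cfDen]
  exact abs_cfErr_lt_iff hT n (hψpos _ (cfQ_eq_cfDen x n ▸ one_le_cfDen_succ hT n))

/-- **Criterion for Dirichlet improvability via the Gauss map.** For irrational
`x = [a₁, a₂, …] ∈ [0,1)`, one has `x ∈ D(ψ)` iff
`[a_{n+1}, a_{n+2}, …] · [a_n, a_{n-1}, …, a₁] > 1/Ψ(q_n(x))` for all sufficiently
large `n`, where `[a_{n+1}, a_{n+2}, …] = T^[n] x` is the value of the infinite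
continued fraction of the tail and `[a_n, …, a₁]` is the value of the finite one. -/
theorem mem_dirichletSet_iff_gaussMap_prod
    (ψ : ℕ → ℝ) (hψpos : ∀ t : ℕ, 0 < t → 0 < ψ t)
    (hψanti : ∀ m n : ℕ, 0 < m → m ≤ n → ψ n ≤ ψ m)
    (hψ1 : ∃ T : ℕ, ∀ t ≥ T, (t : ℝ) * ψ t < 1)
    (Ψ : ℕ → ℝ) (hΨ : ∀ t : ℕ, Ψ t = t * ψ t / (1 - t * ψ t))
    (x : ℝ) (hx : x ∈ Ico (0 : ℝ) 1) (hirr : Irrational x) :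
    x ∈ DirichletSetNat ψ ↔
      ∃ N : ℕ, ∀ n ≥ N, 0 < n →
        1 / Ψ (cfQ x n) <
          (gaussMap^[n] x) * finCFValue ((List.range' 1 n).reverse.map (cfA x)) :=
  mem_dirichletSet_iff_gaussMap_prod_general ψ hψpos hψanti Ψ hΨ x hx hirr
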